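/- arXiv:1905.13114 — 3 statements merged into one kernel-verified Lean document; each statement's English description precedes it below -/
import Mathlib

section
/- The implicitly defined function Φ on ℂ² ∖ {0} is smooth, and its first complex derivatives are given by ∂Φ/∂z_i = z̄_i Φ^(1−2k_i) Z^(−1) for i = 1, 2, where Z = 2(k1 |z1|² Φ^(−2k1) + k2 |z2|² Φ^(−2k2)). -/
set_option maxHeartbeats 1000000

open Real

lemma auxAnti {A B p q a b : ℝ} (hA : 0 ≤ A) (hB : 0 ≤ B) (hAB : 0 < A ∨ 0 < B)
    (hp : p < 0) (hq : q < 0) (ha : 0 < a) (hab : a < b) :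
    A * b ^ p + B * b ^ q < A * a ^ p + B * a ^ q := by
  rcases hAB with h | h
  · have h1 : A * b ^ p < A * a ^ p :=
      mul_lt_mul_of_pos_left (Real.rpow_lt_rpow_of_neg ha hab hp) h
    have h2 : B * b ^ q ≤ B * a ^ q :=
      mul_le_mul_of_nonneg_left (Real.rpow_le_rpow_of_nonpos ha hab.le hq.le) hB
    linarith
  · have h1 : A * b ^ p ≤ A * a ^ p :=
      mul_le_mul_of_nonneg_left (Real.rpow_le_rpow_of_nonpos ha hab.le hp.le) hA
    have h2 : B * b ^ q < B * a ^ q :=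
      mul_lt_mul_of_pos_left (Real.rpow_lt_rpow_of_neg ha hab hq) h
    linarith

lemma auxUniq {k1 k2 : ℝ} (hk1 : 0 < k1) (hk2 : 0 < k2) {z : ℂ × ℂ} (hz : z ≠ 0)
    {a b : ℝ} (ha : 0 < a) (hb : 0 < b)
    (hab : ‖z.1‖ ^ 2 * a ^ (-(2*k1)) + ‖z.2‖ ^ 2 * a ^ (-(2*k2))
         = ‖z.1‖ ^ 2 * b ^ (-(2*k1)) + ‖z.2‖ ^ 2 * b ^ (-(2*k2))) : a = b := by
  have hAB : 0 < ‖z.1‖ ^ 2 ∨ 0 < ‖z.2‖ ^ 2 := by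
    have : z.1 ≠ 0 ∨ z.2 ≠ 0 := by
      by_contra h
      push_neg at h
      exact hz (Prod.ext h.1 h.2)
    rcases this with h | h
    · exact Or.inl (pow_pos (norm_pos_iff.mpr h) 2)
    · exact Or.inr (pow_pos (norm_pos_iff.mpr h) 2)
  have hp : -(2*k1) < 0 := by linarith
  have hq : -(2*k2) < 0 := by linarith
  rcases lt_trichotomy a b with h | h | h
  · exact absurd hab (ne_of_gt (auxAnti (by positivity) (by positivity) hAB hp hq ha h))
  · exact h
  · exact absurd hab (ne_of_lt (auxAnti (by positivity) (by positivity) hAB hp hq hb h))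

lemma auxSmoothAt {k1 k2 : ℝ} (hk1 : 0 < k1) (hk2 : 0 < k2)
    (Φ : ℂ × ℂ → ℝ)
    (hΦpos : ∀ z : ℂ × ℂ, z ≠ 0 → 0 < Φ z)
    (hΦ : ∀ z : ℂ × ℂ, z ≠ 0 →
      ‖z.1‖ ^ 2 * Φ z ^ (-(2 * k1)) + ‖z.2‖ ^ 2 * Φ z ^ (-(2 * k2)) = 1)
    {z₀ : ℂ × ℂ} (hz₀ : z₀ ≠ 0) : ContDiffAt ℝ (⊤ : ℕ∞) Φ z₀ := by
  set s₀ : ℝ := Φ z₀ with hs₀def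
  have hs₀ : 0 < s₀ := hΦpos z₀ hz₀
  set F : (ℂ × ℂ) × ℝ → ℝ := fun p =>
    ‖p.1.1‖ ^ 2 * p.2 ^ (-(2*k1)) + ‖p.1.2‖ ^ 2 * p.2 ^ (-(2*k2)) - 1 with hFdef
  set H : (ℂ × ℂ) × ℝ → (ℂ × ℂ) × ℝ := fun p => (p.1, F p) with hHdef
  set p₀ : (ℂ × ℂ) × ℝ := (z₀, s₀) with hp₀def
  -- smoothness of F
  have hF : ContDiffAt ℝ (⊤ : ℕ∞) F p₀ := by
    have c1 : ContDiff ℝ (⊤ : ℕ∞) (fun p : (ℂ × ℂ) × ℝ => ‖p.1.1‖ ^ 2) :=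
      (contDiff_norm_sq ℂ).comp (contDiff_fst.comp contDiff_fst)
    have c2 : ContDiff ℝ (⊤ : ℕ∞) (fun p : (ℂ × ℂ) × ℝ => ‖p.1.2‖ ^ 2) :=
      (contDiff_norm_sq ℂ).comp (contDiff_snd.comp contDiff_fst)
    have r1 : ContDiffAt ℝ (⊤ : ℕ∞) (fun p : (ℂ × ℂ) × ℝ => p.2 ^ (-(2*k1))) p₀ :=
      (Real.contDiffAt_rpow_const_of_ne hs₀.ne').comp p₀ contDiffAt_snd
    have r2 : ContDiffAt ℝ (⊤ : ℕ∞) (fun p : (ℂ × ℂ) × ℝ => p.2 ^ (-(2*k2))) p₀ :=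
      (Real.contDiffAt_rpow_const_of_ne hs₀.ne').comp p₀ contDiffAt_snd
    exact ((c1.contDiffAt.mul r1).add (c2.contDiffAt.mul r2)).sub contDiffAt_const
  have hA : HasFDerivAt F (fderiv ℝ F p₀) p₀ := (hF.differentiableAt (by simp)).hasFDerivAt
  set A : (ℂ × ℂ) × ℝ →L[ℝ] ℝ := fderiv ℝ F p₀ with hAdef
  set c : ℝ := ‖z₀.1‖ ^ 2 * (-(2*k1) * s₀ ^ (-(2*k1) - 1))
      + ‖z₀.2‖ ^ 2 * (-(2*k2) * s₀ ^ (-(2*k2) - 1)) with hcdef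
  have hnz : z₀.1 ≠ 0 ∨ z₀.2 ≠ 0 := by
    by_contra h; push_neg at h; exact hz₀ (Prod.ext h.1 h.2)
  have hcneg : c < 0 := by
    have P1 := Real.rpow_pos_of_pos hs₀ (-(2*k1) - 1)
    have P2 := Real.rpow_pos_of_pos hs₀ (-(2*k2) - 1)
    have t1 : ‖z₀.1‖ ^ 2 * (-(2*k1) * s₀ ^ (-(2*k1) - 1)) ≤ 0 :=
      mul_nonpos_of_nonneg_of_nonpos (by positivity) (by nlinarith)
    have t2 : ‖z₀.2‖ ^ 2 * (-(2*k2) * s₀ ^ (-(2*k2) - 1)) ≤ 0 :=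
      mul_nonpos_of_nonneg_of_nonpos (by positivity) (by nlinarith)
    rcases hnz with h | h
    · have : ‖z₀.1‖ ^ 2 * (-(2*k1) * s₀ ^ (-(2*k1) - 1)) < 0 :=
        mul_neg_of_pos_of_neg (pow_pos (norm_pos_iff.mpr h) 2) (by nlinarith)
      linarith
    · have : ‖z₀.2‖ ^ 2 * (-(2*k2) * s₀ ^ (-(2*k2) - 1)) < 0 :=
        mul_neg_of_pos_of_neg (pow_pos (norm_pos_iff.mpr h) 2) (by nlinarith)
      linarith
  have hA01 : A ((0 : ℂ × ℂ), (1 : ℝ)) = c := by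
    have hγ : HasDerivAt (fun t : ℝ => ((z₀ : ℂ × ℂ), t)) ((0 : ℂ × ℂ), (1 : ℝ)) s₀ :=
      (hasDerivAt_const s₀ z₀).prodMk (hasDerivAt_id s₀)
    have h1 : HasDerivAt (fun t : ℝ => F (z₀, t)) (A ((0 : ℂ × ℂ), (1 : ℝ))) s₀ :=
      hA.comp_hasDerivAt s₀ hγ
    have h2 : HasDerivAt (fun t : ℝ => F (z₀, t)) c s₀ := by
      have e1 : HasDerivAt (fun t : ℝ => t ^ (-(2*k1))) (-(2*k1) * s₀ ^ (-(2*k1) - 1)) s₀ :=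
        Real.hasDerivAt_rpow_const (Or.inl hs₀.ne')
      have e2 : HasDerivAt (fun t : ℝ => t ^ (-(2*k2))) (-(2*k2) * s₀ ^ (-(2*k2) - 1)) s₀ :=
        Real.hasDerivAt_rpow_const (Or.inl hs₀.ne')
      exact ((e1.const_mul (‖z₀.1‖ ^ 2)).add (e2.const_mul (‖z₀.2‖ ^ 2))).sub_const 1
    exact h1.unique h2
  have hAsplit : ∀ (v : ℂ × ℂ) (t : ℝ), A (v, t) = A (v, 0) + t * c := by
    intro v t
    have : ((v, t) : (ℂ × ℂ) × ℝ) = (v, 0) + t • ((0 : ℂ × ℂ), (1 : ℝ)) := by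
      simp [Prod.ext_iff]
    rw [this, map_add, map_smul, hA01, smul_eq_mul]
  -- the linear equivalence
  set toL : (ℂ × ℂ) × ℝ →L[ℝ] (ℂ × ℂ) × ℝ := (ContinuousLinearMap.fst ℝ (ℂ × ℂ) ℝ).prod A
    with htoLdef
  set invL : (ℂ × ℂ) × ℝ →L[ℝ] (ℂ × ℂ) × ℝ :=
    (ContinuousLinearMap.fst ℝ (ℂ × ℂ) ℝ).prod
      (c⁻¹ • (ContinuousLinearMap.snd ℝ (ℂ × ℂ) ℝ -
        A.comp ((ContinuousLinearMap.inl ℝ (ℂ × ℂ) ℝ).comp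
          (ContinuousLinearMap.fst ℝ (ℂ × ℂ) ℝ)))) with hinvLdef
  have hc0 : c ≠ 0 := hcneg.ne
  have hleft : Function.LeftInverse invL toL := by
    rintro ⟨v, t⟩
    simp only [htoLdef, hinvLdef, ContinuousLinearMap.prod_apply,
      ContinuousLinearMap.coe_fst', ContinuousLinearMap.smul_apply,
      ContinuousLinearMap.sub_apply, ContinuousLinearMap.coe_snd',
      ContinuousLinearMap.coe_comp', Function.comp_apply,
      ContinuousLinearMap.inl_apply, smul_eq_mul]
    refine Prod.ext rfl ?_
    rw [hAsplit v t]
    field_simp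
    ring
  have hright : Function.RightInverse invL toL := by
    rintro ⟨v, u⟩
    simp only [htoLdef, hinvLdef, ContinuousLinearMap.prod_apply,
      ContinuousLinearMap.coe_fst', ContinuousLinearMap.smul_apply,
      ContinuousLinearMap.sub_apply, ContinuousLinearMap.coe_snd',
      ContinuousLinearMap.coe_comp', Function.comp_apply,
      ContinuousLinearMap.inl_apply, smul_eq_mul]
    refine Prod.ext rfl ?_
    rw [hAsplit v _]
    field_simp
    ring
  set E' : ((ℂ × ℂ) × ℝ) ≃L[ℝ] ((ℂ × ℂ) × ℝ) :=
    ContinuousLinearEquiv.equivOfInverse toL invL hleft hright with hE'def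
  have hH : ContDiffAt ℝ (⊤ : ℕ∞) H p₀ := contDiffAt_fst.prodMk hF
  have hH' : HasFDerivAt H (E' : ((ℂ × ℂ) × ℝ) →L[ℝ] ((ℂ × ℂ) × ℝ)) p₀ := hasFDerivAt_fst.prodMk hA
  set ψ : (ℂ × ℂ) × ℝ → (ℂ × ℂ) × ℝ := hH.localInverse hH' (by simp) with hψdef
  have hcd : ContDiffAt ℝ (⊤ : ℕ∞) ψ (H p₀) := hH.to_localInverse hH' (by simp)
  set S := hH.hasStrictFDerivAt' hH' (by simp) with hSdef
  have hψS : ψ = S.localInverse H E' p₀ := rfl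
  have hHp₀ : H p₀ = (z₀, (0 : ℝ)) := by
    have h := hΦ z₀ hz₀
    simp only [hHdef, hFdef, hp₀def]
    refine Prod.ext rfl ?_
    show ‖z₀.1‖ ^ 2 * s₀ ^ (-(2*k1)) + ‖z₀.2‖ ^ 2 * s₀ ^ (-(2*k2)) - 1 = 0
    rw [hs₀def]
    linarith
  have hev1 : ∀ᶠ q in nhds ((z₀ : ℂ × ℂ), (0 : ℝ)), H (ψ q) = q := by
    rw [← hHp₀]
    exact S.eventually_right_inverse
  have hu : Filter.Tendsto (fun z : ℂ × ℂ => ((z, (0 : ℝ)) : (ℂ × ℂ) × ℝ)) (nhds z₀)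
      (nhds ((z₀ : ℂ × ℂ), (0 : ℝ))) :=
    (continuous_id.prodMk continuous_const).tendsto z₀
  have hev2 : ∀ᶠ z in nhds z₀, H (ψ (z, 0)) = (z, 0) := hu.eventually hev1
  set φ : ℂ × ℂ → ℝ := fun z => (ψ (z, 0)).2 with hφdef
  have hψz₀ : ψ (z₀, 0) = p₀ := by
    have := S.localInverse_apply_image
    rwa [hHp₀] at this
  have hφ₀ : φ z₀ = s₀ := by rw [hφdef]; simp [hψz₀, hp₀def]
  have hφcd : ContDiffAt ℝ (⊤ : ℕ∞) φ z₀ := by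
    have h1 : ContDiffAt ℝ (⊤ : ℕ∞) (fun z : ℂ × ℂ => ψ (z, 0)) z₀ := by
      have := hHp₀ ▸ hcd
      exact this.comp z₀ (contDiffAt_id.prodMk contDiffAt_const)
    exact contDiffAt_snd.comp z₀ h1
  have hφpos : ∀ᶠ z in nhds z₀, 0 < φ z := by
    have h0 : ∀ᶠ t in nhds (φ z₀), 0 < t := by
      rw [hφ₀]; exact eventually_gt_nhds hs₀
    exact hφcd.continuousAt.eventually h0
  have hzne : ∀ᶠ z in nhds z₀, z ≠ 0 := by
    have : IsOpen {w : ℂ × ℂ | w ≠ 0} := isOpen_ne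
    exact this.eventually_mem hz₀
  have heq : Φ =ᶠ[nhds z₀] φ := by
    filter_upwards [hev2, hφpos, hzne] with z h2 hp hne
    have hw1 : (ψ (z, 0)).1 = z := congrArg Prod.fst h2
    have hw2 : F (ψ (z, 0)) = 0 := by
      have := congrArg Prod.snd h2
      simpa [hHdef] using this
    have hkey : ‖z.1‖ ^ 2 * (φ z) ^ (-(2*k1)) + ‖z.2‖ ^ 2 * (φ z) ^ (-(2*k2)) = 1 := by
      simp only [hFdef] at hw2
      rw [hw1] at hw2
      simp only [hφdef]
      linarith
    exact auxUniq hk1 hk2 hne (hΦpos z hne) hp (by rw [hΦ z hne, hkey])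
  exact hφcd.congr_of_eventuallyEq heq


/-- The Wirtinger derivative `∂/∂zᵢ` of a function on `ℂ²`. -/
noncomputable def wirt (i : Fin 2) (f : ℂ × ℂ → ℂ) (z : ℂ × ℂ) : ℂ :=
  (fderiv ℝ f z (if i = 0 then ((1 : ℂ), (0 : ℂ)) else ((0 : ℂ), (1 : ℂ)))
    - Complex.I * fderiv ℝ f z
        (if i = 0 then (Complex.I, (0 : ℂ)) else ((0 : ℂ), Complex.I))) / 2

/-- The function `Φ` implicitly defined by `|z₁|² Φ^(−2k1) + |z₂|² Φ^(−2k2) = 1` is smooth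
on `ℂ² ∖ {0}` and its first Wirtinger derivatives are `∂Φ/∂zᵢ = z̄ᵢ Φ^(1−2kᵢ) Z⁻¹`, where
`Z = 2(k1 |z₁|² Φ^(−2k1) + k2 |z₂|² Φ^(−2k2))`. -/
theorem stmt_5 (k1 k2 : ℝ) (hk1 : 0 < k1) (hk12 : k1 ≤ k2) (hsum : k1 + k2 = 1)
    (Φ : ℂ × ℂ → ℝ)
    (hΦpos : ∀ z : ℂ × ℂ, z ≠ 0 → 0 < Φ z)
    (hΦ : ∀ z : ℂ × ℂ, z ≠ 0 →
      ‖z.1‖ ^ 2 * Φ z ^ (-(2 * k1)) + ‖z.2‖ ^ 2 * Φ z ^ (-(2 * k2)) = 1) :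
    ContDiffOn ℝ (⊤ : ℕ∞) Φ {z : ℂ × ℂ | z ≠ 0} ∧
    ∀ z : ℂ × ℂ, z ≠ 0 → ∀ i : Fin 2,
      wirt i (fun w => (Φ w : ℂ)) z
        = (starRingEnd ℂ) (if i = 0 then z.1 else z.2)
            * ((Φ z ^ (1 - 2 * (if i = 0 then k1 else k2)) : ℝ) : ℂ)
            * ((2 * (k1 * ‖z.1‖ ^ 2 * Φ z ^ (-(2 * k1))
                + k2 * ‖z.2‖ ^ 2 * Φ z ^ (-(2 * k2))) : ℝ) : ℂ)⁻¹ := by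
  have hk2 : 0 < k2 := lt_of_lt_of_le hk1 hk12
  have hΦn : ∀ z : ℂ × ℂ, z ≠ 0 →
      ‖z.1‖ ^ 2 * Φ z ^ (-(2 * k1)) + ‖z.2‖ ^ 2 * Φ z ^ (-(2 * k2)) = 1 := by
    intro z hz
    simpa using hΦ z hz
  have hsm : ∀ {z : ℂ × ℂ}, z ≠ 0 → ContDiffAt ℝ (⊤ : ℕ∞) Φ z :=
    fun {z} hz => auxSmoothAt hk1 hk2 Φ hΦpos hΦn hz
  refine ⟨fun z hz => (hsm hz).contDiffWithinAt, ?_⟩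
  intro z hz i
  set s : ℝ := Φ z with hsdef
  have hs : 0 < s := hΦpos z hz
  have hD : HasFDerivAt Φ (fderiv ℝ Φ z) z := ((hsm hz).differentiableAt (by simp)).hasFDerivAt
  set D : (ℂ × ℂ) →L[ℝ] ℝ := fderiv ℝ Φ z with hDdef
  set Zr : ℝ := 2 * (k1 * ‖z.1‖ ^ 2 * s ^ (-(2*k1)) + k2 * ‖z.2‖ ^ 2 * s ^ (-(2*k2)))
    with hZrdef
  have hnz : z.1 ≠ 0 ∨ z.2 ≠ 0 := by
    by_contra h; push_neg at h; exact hz (Prod.ext h.1 h.2)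
  have hZr : 0 < Zr := by
    have P1 := Real.rpow_pos_of_pos hs (-(2*k1))
    have P2 := Real.rpow_pos_of_pos hs (-(2*k2))
    have t1 : 0 ≤ k1 * ‖z.1‖ ^ 2 * s ^ (-(2*k1)) := by positivity
    have t2 : 0 ≤ k2 * ‖z.2‖ ^ 2 * s ^ (-(2*k2)) := by positivity
    rcases hnz with h | h
    · have : 0 < k1 * ‖z.1‖ ^ 2 * s ^ (-(2*k1)) := by
        have := norm_pos_iff.mpr h; positivity
      linarith
    · have : 0 < k2 * ‖z.2‖ ^ 2 * s ^ (-(2*k2)) := by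
        have := norm_pos_iff.mpr h; positivity
      linarith
  -- the derivative of the implicit relation
  have hg1 : HasFDerivAt (fun w : ℂ × ℂ => ‖w.1‖ ^ 2)
      (2 • ((innerSL ℝ z.1).comp (ContinuousLinearMap.fst ℝ ℂ ℂ))) z :=
    hasFDerivAt_fst.norm_sq
  have hg2 : HasFDerivAt (fun w : ℂ × ℂ => ‖w.2‖ ^ 2)
      (2 • ((innerSL ℝ z.2).comp (ContinuousLinearMap.snd ℝ ℂ ℂ))) z :=
    hasFDerivAt_snd.norm_sq
  have hr1 : HasFDerivAt (fun w => Φ w ^ (-(2*k1))) ((-(2*k1) * s ^ (-(2*k1) - 1)) • D) z :=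
    (Real.hasDerivAt_rpow_const (p := -(2*k1)) (Or.inl hs.ne')).comp_hasFDerivAt z hD
  have hr2 : HasFDerivAt (fun w => Φ w ^ (-(2*k2))) ((-(2*k2) * s ^ (-(2*k2) - 1)) • D) z :=
    (Real.hasDerivAt_rpow_const (p := -(2*k2)) (Or.inl hs.ne')).comp_hasFDerivAt z hD
  have hsumD := (hg1.mul hr1).add (hg2.mul hr2)
  have hev : (fun w : ℂ × ℂ => ‖w.1‖ ^ 2 * Φ w ^ (-(2*k1)) + ‖w.2‖ ^ 2 * Φ w ^ (-(2*k2)))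
      =ᶠ[nhds z] fun _ => (1 : ℝ) := by
    have : ∀ᶠ w in nhds z, w ≠ 0 := (isOpen_ne (x := (0 : ℂ × ℂ))).eventually_mem hz
    filter_upwards [this] with w hw
    exact hΦn w hw
  have hg0 : HasFDerivAt
      (fun w : ℂ × ℂ => ‖w.1‖ ^ 2 * Φ w ^ (-(2*k1)) + ‖w.2‖ ^ 2 * Φ w ^ (-(2*k2)))
      (0 : (ℂ × ℂ) →L[ℝ] ℝ) z :=
    (hasFDerivAt_const (1 : ℝ) z).congr_of_eventuallyEq hev
  have hL0 := hsumD.unique hg0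
  have hLv : ∀ v : ℂ × ℂ,
      ‖z.1‖ ^ 2 * ((-(2*k1) * s ^ (-(2*k1) - 1)) * D v)
        + s ^ (-(2*k1)) * (2 * ((starRingEnd ℂ) z.1 * v.1).re)
      + (‖z.2‖ ^ 2 * ((-(2*k2) * s ^ (-(2*k2) - 1)) * D v)
        + s ^ (-(2*k2)) * (2 * ((starRingEnd ℂ) z.2 * v.2).re)) = 0 := by
    intro v
    have h := DFunLike.congr_fun hL0 v
    simp only [ContinuousLinearMap.add_apply, ContinuousLinearMap.smul_apply,
      ContinuousLinearMap.coe_comp', Function.comp_apply, ContinuousLinearMap.coe_fst',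
      ContinuousLinearMap.coe_snd', innerSL_apply_apply, Complex.inner, smul_eq_mul, two_smul,
      ContinuousLinearMap.zero_apply] at h
    rw [← hsdef] at h
    rw [mul_comm v.1, mul_comm v.2] at h
    linarith [h]
  have e1 : s ^ (-(2*k1)) = s ^ (-(2*k1) - 1) * s := by
    rw [show -(2*k1) = (-(2*k1) - 1) + 1 by ring, Real.rpow_add_one hs.ne']
    ring_nf
  have e2 : s ^ (-(2*k2)) = s ^ (-(2*k2) - 1) * s := by
    rw [show -(2*k2) = (-(2*k2) - 1) + 1 by ring, Real.rpow_add_one hs.ne']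
    ring_nf
  have hDv : ∀ v : ℂ × ℂ, D v = 2 * s * (((starRingEnd ℂ) z.1 * v.1).re * s ^ (-(2*k1))
      + ((starRingEnd ℂ) z.2 * v.2).re * s ^ (-(2*k2))) / Zr := by
    intro v
    have h := hLv v
    have key : Zr * D v = 2 * s * (((starRingEnd ℂ) z.1 * v.1).re * s ^ (-(2*k1))
        + ((starRingEnd ℂ) z.2 * v.2).re * s ^ (-(2*k2))) := by
      rw [hZrdef, e1, e2]
      rw [e1, e2] at h
      linear_combination (-s) * h
    rw [eq_div_iff hZr.ne']
    linarith [key]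
  have hfC : fderiv ℝ (fun w => ((Φ w : ℝ) : ℂ)) z = Complex.ofRealCLM.comp D :=
    (Complex.ofRealCLM.hasFDerivAt.comp z hD).fderiv
  have hZrC : ((Zr : ℝ) : ℂ) ≠ 0 := Complex.ofReal_ne_zero.mpr hZr.ne'
  have e3 : s ^ ((1:ℝ) - 2*k1) = s ^ (-(2*k1)) * s := by
    rw [show (1:ℝ) - 2*k1 = -(2*k1) + 1 by ring, Real.rpow_add_one hs.ne']
  have e4 : s ^ ((1:ℝ) - 2*k2) = s ^ (-(2*k2)) * s := by
    rw [show (1:ℝ) - 2*k2 = -(2*k2) + 1 by ring, Real.rpow_add_one hs.ne']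
  fin_cases i
  · simp only [wirt, hfC, if_pos rfl, ContinuousLinearMap.coe_comp', Function.comp_apply,
      Complex.ofRealCLM_apply, hDv, Complex.mul_re, Complex.conj_re, Complex.conj_im,
      Complex.one_re, Complex.one_im, Complex.I_re, Complex.I_im, Complex.zero_re,
      Complex.zero_im, Fin.mk_zero, Fin.mk_one, reduceIte]
    simp only [← hsdef, ← hZrdef, e3]
    rw [show ((starRingEnd ℂ) z.1) = (z.1.re : ℂ) - (z.1.im : ℂ) * Complex.I by
      simp [Complex.ext_iff]]
    push_cast
    field_simp
    ring
  · simp only [wirt, hfC, ContinuousLinearMap.coe_comp', Function.comp_apply,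
      Complex.ofRealCLM_apply, hDv, Complex.mul_re, Complex.conj_re, Complex.conj_im,
      Complex.one_re, Complex.one_im, Complex.I_re, Complex.I_im, Complex.zero_re,
      Complex.zero_im, Fin.mk_zero, Fin.mk_one, reduceIte]
    simp only [eq_false (by decide : ¬((1 : Fin 2) = 0)), if_false, Complex.zero_re,
      Complex.zero_im, Complex.one_re, Complex.one_im, Complex.I_re, Complex.I_im]
    simp only [← hsdef, ← hZrdef, e4]
    rw [show ((starRingEnd ℂ) z.2) = (z.2.re : ℂ) - (z.2.im : ℂ) * Complex.I by
      simp [Complex.ext_iff]]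
    push_cast
    field_simp
    ring
end

section
/- Along the Chern–Ricci flow ∂g/∂t = −Ric^{Ch}(g), the trace with respect to a fixed Hermitian metric χ evolves by (∂/∂t − Δ_ω) tr_χ ω = −g^{i j̄} ∂_i∂_{j̄}χ^{k l̄} g_{k l̄} + χ^{k l̄} g^{i j̄}(∂_k∂_{l̄} ĝ_{i j̄} − ∂_i∂_{j̄} ĝ_{k l̄}) − 2 Re(g^{i j̄} ∂_i χ^{k l̄} ∂_{j̄} g_{k l̄}) − χ^{k l̄} g^{p j̄} g^{i q̄} ∂_k g_{p q̄} ∂_{l̄} g_{i j̄}, where g(t) = ĝ − 2t·Ric(χ) + ∂∂̄φ and hence ∂_k∂_{l̄} g_{i j̄} − ∂_i∂_{j̄} g_{k l̄} = ∂_k∂_{l̄} ĝ_{i j̄} − ∂_i∂_{j̄} ĝ_{k l̄}. -/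
open scoped ComplexOrder

/-- The conjugate Wirtinger derivative `∂/∂z̄ⱼ`. -/
noncomputable def wbar (i : Fin 2) (f : ℂ × ℂ → ℂ) (z : ℂ × ℂ) : ℂ :=
  (fderiv ℝ f z (if i = 0 then ((1 : ℂ), (0 : ℂ)) else ((0 : ℂ), (1 : ℂ)))
    + Complex.I * fderiv ℝ f z
        (if i = 0 then (Complex.I, (0 : ℂ)) else ((0 : ℂ), Complex.I))) / 2


open Complex


noncomputable def pdv (v : ℂ × ℂ) (f : ℂ × ℂ → ℂ) (z : ℂ × ℂ) : ℂ := fderiv ℝ f z v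

lemma pdv_congr {f f' : ℂ × ℂ → ℂ} {z v} (h : f =ᶠ[nhds z] f') :
    pdv v f z = pdv v f' z := by
  unfold pdv; rw [h.fderiv_eq]

lemma pdv_add {f g : ℂ × ℂ → ℂ} {z v} (hf : DifferentiableAt ℝ f z)
    (hg : DifferentiableAt ℝ g z) :
    pdv v (fun u => f u + g u) z = pdv v f z + pdv v g z := by
  unfold pdv; rw [fderiv_fun_add hf hg]; rfl

lemma pdv_sub {f g : ℂ × ℂ → ℂ} {z v} (hf : DifferentiableAt ℝ f z)
    (hg : DifferentiableAt ℝ g z) :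
    pdv v (fun u => f u - g u) z = pdv v f z - pdv v g z := by
  unfold pdv; rw [fderiv_fun_sub hf hg]; rfl

lemma pdv_mul {f g : ℂ × ℂ → ℂ} {z v} (hf : DifferentiableAt ℝ f z)
    (hg : DifferentiableAt ℝ g z) :
    pdv v (fun u => f u * g u) z = pdv v f z * g z + f z * pdv v g z := by
  unfold pdv; rw [fderiv_fun_mul hf hg]
  simp [smul_eq_mul]; ring

lemma pdv_const_mul {f : ℂ × ℂ → ℂ} {z v} (c : ℂ) (hf : DifferentiableAt ℝ f z) :
    pdv v (fun u => c * f u) z = c * pdv v f z := by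
  have := pdv_mul (f := fun _ => c) (g := f) (z := z) (v := v) (by fun_prop) hf
  simpa [pdv] using this

lemma pdv_cderiv {f : ℂ × ℂ → ℂ} {h : ℂ → ℂ} {h' : ℂ} {z v}
    (hh : HasDerivAt h h' (f z)) (hf : DifferentiableAt ℝ f z) :
    pdv v (fun u => h (f u)) z = h' * pdv v f z := by
  have H : HasFDerivAt (fun u => h (f u))
      (((ContinuousLinearMap.smulRight (1 : ℂ →L[ℂ] ℂ) h').restrictScalars ℝ).comp
        (fderiv ℝ f z)) z :=
    (hh.hasFDerivAt.restrictScalars ℝ).comp z hf.hasFDerivAt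
  unfold pdv
  rw [H.fderiv]
  simp [smul_eq_mul, mul_comm]

lemma pdv_contDiffAt {f : ℂ × ℂ → ℂ} {z v} (hf : ContDiffAt ℝ (⊤ : ℕ∞) f z) :
    ContDiffAt ℝ (⊤ : ℕ∞) (pdv v f) z := by
  have h1 : ContDiffAt ℝ (⊤ : ℕ∞) (fderiv ℝ f) z := hf.fderiv_right (by simp)
  exact (ContinuousLinearMap.apply ℝ ℂ v).contDiff.contDiffAt.comp z h1

lemma pdv_comm {f : ℂ × ℂ → ℂ} {z v w} (hf : ContDiffAt ℝ (⊤ : ℕ∞) f z) :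
    pdv v (pdv w f) z = pdv w (pdv v f) z := by
  have hd : DifferentiableAt ℝ (fderiv ℝ f) z :=
    (hf.fderiv_right (m := 1) (WithTop.coe_le_coe.mpr le_top)).differentiableAt (by simp)
  have key : ∀ a b : ℂ × ℂ, pdv a (pdv b f) z = fderiv ℝ (fderiv ℝ f) z a b := by
    intro a b
    have : pdv b f = fun u => (ContinuousLinearMap.apply ℝ ℂ b) (fderiv ℝ f u) := rfl
    rw [this]
    unfold pdv
    have H : HasFDerivAt (fun u => (ContinuousLinearMap.apply ℝ ℂ b) (fderiv ℝ f u))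
        ((ContinuousLinearMap.apply ℝ ℂ b).comp (fderiv ℝ (fderiv ℝ f) z)) z :=
      (ContinuousLinearMap.apply ℝ ℂ b).hasFDerivAt.comp z hd.hasFDerivAt
    rw [H.fderiv]
    simp
  rw [key, key]
  exact hf.isSymmSndFDerivAt (by rw [minSmoothness_of_isRCLikeNormedField]; exact WithTop.coe_le_coe.mpr le_top) v w

noncomputable def eE (i : Fin 2) : ℂ × ℂ := if i = 0 then ((1:ℂ),(0:ℂ)) else ((0:ℂ),(1:ℂ))
noncomputable def iI (i : Fin 2) : ℂ × ℂ := if i = 0 then (Complex.I,(0:ℂ)) else ((0:ℂ),Complex.I)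

/-- unified Wirtinger-type operator -/
noncomputable def wop (s : ℂ) (i : Fin 2) (f : ℂ × ℂ → ℂ) (z : ℂ × ℂ) : ℂ :=
  (pdv (eE i) f z + s * pdv (iI i) f z) / 2

lemma pdv_wop {f : ℂ × ℂ → ℂ} {z v} (s : ℂ) (i : Fin 2)
    (h1 : DifferentiableAt ℝ (pdv (eE i) f) z) (h2 : DifferentiableAt ℝ (pdv (iI i) f) z) :
    pdv v (wop s i f) z = (pdv v (pdv (eE i) f) z + s * pdv v (pdv (iI i) f) z) / 2 := by
  have : wop s i f = fun u => (1/2 : ℂ) * pdv (eE i) f u + (s/2) * pdv (iI i) f u := by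
    funext u; unfold wop; ring
  rw [this, pdv_add (by fun_prop) (by fun_prop), pdv_const_mul _ h1, pdv_const_mul _ h2]
  ring

lemma wop_contDiffAt {f : ℂ × ℂ → ℂ} {z} {s : ℂ} {i : Fin 2} (hf : ContDiffAt ℝ (⊤ : ℕ∞) f z) :
    ContDiffAt ℝ (⊤ : ℕ∞) (wop s i f) z := by
  have : wop s i f = fun u => (pdv (eE i) f u + s * pdv (iI i) f u) / 2 := rfl
  rw [this]
  exact ((pdv_contDiffAt hf).add ((contDiffAt_const (c := s)).mul (pdv_contDiffAt hf))).div_const 2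

lemma wop_comm {f : ℂ × ℂ → ℂ} {z} {s s' : ℂ} {a b : Fin 2} (hf : ContDiffAt ℝ (⊤ : ℕ∞) f z) :
    wop s a (wop s' b f) z = wop s' b (wop s a f) z := by
  have d1 : DifferentiableAt ℝ (pdv (eE b) f) z :=
    (pdv_contDiffAt hf).differentiableAt (by simp)
  have d2 : DifferentiableAt ℝ (pdv (iI b) f) z :=
    (pdv_contDiffAt hf).differentiableAt (by simp)
  have d3 : DifferentiableAt ℝ (pdv (eE a) f) z :=
    (pdv_contDiffAt hf).differentiableAt (by simp)
  have d4 : DifferentiableAt ℝ (pdv (iI a) f) z :=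
    (pdv_contDiffAt hf).differentiableAt (by simp)
  show (pdv (eE a) (wop s' b f) z + s * pdv (iI a) (wop s' b f) z) / 2
      = (pdv (eE b) (wop s a f) z + s' * pdv (iI b) (wop s a f) z) / 2
  rw [pdv_wop s' b d1 d2, pdv_wop s' b d1 d2, pdv_wop s a d3 d4, pdv_wop s a d3 d4,
    pdv_comm hf (v := eE a) (w := eE b), pdv_comm hf (v := eE a) (w := iI b),
    pdv_comm hf (v := iI a) (w := eE b), pdv_comm hf (v := iI a) (w := iI b)]
  ring

lemma wop_congr_on {U : Set (ℂ × ℂ)} (hU : IsOpen U) {p q : ℂ × ℂ → ℂ} {s : ℂ} {i : Fin 2}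
    (h : ∀ u ∈ U, p u = q u) {z} (hz : z ∈ U) : wop s i p z = wop s i q z := by
  have he : p =ᶠ[nhds z] q := Filter.eventually_of_mem (hU.mem_nhds hz) h
  unfold wop
  rw [pdv_congr he, pdv_congr he]

lemma wop_add {f g : ℂ × ℂ → ℂ} {z} {s : ℂ} {i : Fin 2} (hf : DifferentiableAt ℝ f z)
    (hg : DifferentiableAt ℝ g z) :
    wop s i (fun u => f u + g u) z = wop s i f z + wop s i g z := by
  unfold wop; rw [pdv_add hf hg, pdv_add hf hg]; ring

lemma wop_sub {f g : ℂ × ℂ → ℂ} {z} {s : ℂ} {i : Fin 2} (hf : DifferentiableAt ℝ f z)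
    (hg : DifferentiableAt ℝ g z) :
    wop s i (fun u => f u - g u) z = wop s i f z - wop s i g z := by
  unfold wop; rw [pdv_sub hf hg, pdv_sub hf hg]; ring

lemma wop_mul {f g : ℂ × ℂ → ℂ} {z} {s : ℂ} {i : Fin 2} (hf : DifferentiableAt ℝ f z)
    (hg : DifferentiableAt ℝ g z) :
    wop s i (fun u => f u * g u) z = wop s i f z * g z + f z * wop s i g z := by
  unfold wop; rw [pdv_mul hf hg, pdv_mul hf hg]; ring

lemma wop_const_mul {f : ℂ × ℂ → ℂ} {z} {s : ℂ} {i : Fin 2} (c : ℂ)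
    (hf : DifferentiableAt ℝ f z) :
    wop s i (fun u => c * f u) z = c * wop s i f z := by
  unfold wop; rw [pdv_const_mul c hf, pdv_const_mul c hf]; ring

lemma wop_cderiv {f : ℂ × ℂ → ℂ} {h : ℂ → ℂ} {h' : ℂ} {z} {s : ℂ} {i : Fin 2}
    (hh : HasDerivAt h h' (f z)) (hf : DifferentiableAt ℝ f z) :
    wop s i (fun u => h (f u)) z = h' * wop s i f z := by
  unfold wop; rw [pdv_cderiv hh hf, pdv_cderiv hh hf]; ring

lemma pdv_conj {f : ℂ × ℂ → ℂ} {z v} (hf : DifferentiableAt ℝ f z) :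
    pdv v (fun u => (starRingEnd ℂ) (f u)) z = (starRingEnd ℂ) (pdv v f z) := by
  have H : HasFDerivAt (fun u => Complex.conjCLE (f u))
      ((Complex.conjCLE : ℂ →L[ℝ] ℂ).comp (fderiv ℝ f z)) z :=
    (Complex.conjCLE : ℂ →L[ℝ] ℂ).hasFDerivAt.comp z hf.hasFDerivAt
  unfold pdv
  rw [show (fun u => (starRingEnd ℂ) (f u)) = fun u => Complex.conjCLE (f u) from rfl, H.fderiv]
  rfl

lemma wop_conj {f : ℂ × ℂ → ℂ} {z} {s : ℂ} {i : Fin 2} (hf : DifferentiableAt ℝ f z) :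
    wop s i (fun u => (starRingEnd ℂ) (f u)) z
      = (starRingEnd ℂ) (wop ((starRingEnd ℂ) s) i f z) := by
  unfold wop
  rw [pdv_conj hf, pdv_conj hf, map_div₀, map_add, map_mul, map_ofNat]
  simp

open scoped ComplexOrder
open Complex

lemma inv2 (M : Matrix (Fin 2) (Fin 2) ℂ) :
    M⁻¹ = (M.det)⁻¹ • !![M 1 1, -M 0 1; -M 1 0, M 0 0] := by
  rw [Matrix.inv_def, Matrix.adjugate_fin_two, Ring.inverse_eq_inv']

lemma posdef_slit {M : Matrix (Fin 2) (Fin 2) ℂ} (h : M.PosDef) : M.det ∈ slitPlane := by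
  have := h.det_pos
  rw [mem_slitPlane_iff]
  left
  rw [Complex.lt_def] at this
  simpa using this.1

lemma posdef_det_ne {M : Matrix (Fin 2) (Fin 2) ℂ} (h : M.PosDef) : M.det ≠ 0 :=
  slitPlane_ne_zero (posdef_slit h)

set_option maxHeartbeats 1000000 in
lemma alg_logdet' (d a00 a01 a10 a11 w00 w01 w10 w11 v00 v01 v10 v11 m00 m01 m10 m11 : ℂ)
    (hdd : d = a00 * a11 - a01 * a10) (hd : d ≠ 0) :
    (-(d ^ 2)⁻¹ * (w00 * a11 + a00 * w11 - (w01 * a10 + a01 * w10)))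
      * (v00 * a11 + a00 * v11 - (v01 * a10 + a01 * v10))
    + d⁻¹ * (m00 * a11 + v00 * w11 + w00 * v11 + a00 * m11
            - (m01 * a10 + v01 * w10 + w01 * v10 + a01 * m10))
    = (d⁻¹ * (a11 * m00 - a10 * m01 - a01 * m10 + a00 * m11))
      - (d⁻¹)^2 *
        ( (a11*a11) * (w00*v00) + (a11*(-a01)) * (w00*v10) + ((-a10)*a11) * (w00*v01) + ((-a10)*(-a01)) * (w00*v11)
        + (a11*(-a10)) * (w01*v00) + (a11*a00) * (w01*v10) + ((-a10)*(-a10)) * (w01*v01) + ((-a10)*a00) * (w01*v11)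
        + ((-a01)*a11) * (w10*v00) + ((-a01)*(-a01)) * (w10*v10) + (a00*a11) * (w10*v01) + (a00*(-a01)) * (w10*v11)
        + ((-a01)*(-a10)) * (w11*v00) + ((-a01)*a00) * (w11*v10) + (a00*(-a10)) * (w11*v01) + (a00*a00) * (w11*v11)) := by
  subst hdd; field_simp; ring

set_option maxHeartbeats 2000000 in
lemma logdet_snd {U : Set (ℂ × ℂ)} (hU : IsOpen U) (A : (ℂ × ℂ) → Matrix (Fin 2) (Fin 2) ℂ)
    (hsm : ∀ i j : Fin 2, ∀ u ∈ U, ContDiffAt ℝ (⊤ : ℕ∞) (fun w => A w i j) u)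
    (hpos : ∀ u ∈ U, (A u).PosDef) {z} (hz : z ∈ U) (s s' : ℂ) (k l : Fin 2) :
    wop s k (wop s' l (fun u => Complex.log ((A u).det))) z
      = (∑ i : Fin 2, ∑ j : Fin 2, (A z)⁻¹ j i * wop s k (wop s' l (fun u => A u i j)) z)
        - ∑ p : Fin 2, ∑ q : Fin 2, ∑ i : Fin 2, ∑ j : Fin 2,
            (A z)⁻¹ j p * (A z)⁻¹ q i
              * wop s k (fun u => A u p q) z * wop s' l (fun u => A u i j) z := by
  classical
  set d : (ℂ × ℂ) → ℂ := fun u => (A u).det with hd_def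
  have hdet2 : ∀ u, d u = A u 0 0 * A u 1 1 - A u 0 1 * A u 1 0 := fun u => Matrix.det_fin_two _
  have hdsm : ∀ u ∈ U, ContDiffAt ℝ (⊤ : ℕ∞) d u := by
    intro u hu
    have : ContDiffAt ℝ (⊤ : ℕ∞) (fun w => A w 0 0 * A w 1 1 - A w 0 1 * A w 1 0) u :=
      ((hsm 0 0 u hu).mul (hsm 1 1 u hu)).sub ((hsm 0 1 u hu).mul (hsm 1 0 u hu))
    exact this.congr_of_eventuallyEq (Filter.Eventually.of_forall (fun w => hdet2 w))
  have hdne : ∀ u ∈ U, d u ≠ 0 := fun u hu => posdef_det_ne (hpos u hu)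
  have hdslit : ∀ u ∈ U, d u ∈ slitPlane := fun u hu => posdef_slit (hpos u hu)
  -- differentiability of entries at points of U
  have hdiff : ∀ (i j : Fin 2) (u : ℂ × ℂ), u ∈ U → DifferentiableAt ℝ (fun w => A w i j) u :=
    fun i j u hu => (hsm i j u hu).differentiableAt (by simp)
  have hddiff : ∀ u ∈ U, DifferentiableAt ℝ d u := fun u hu => (hdsm u hu).differentiableAt (by simp)
  -- first derivatives of d on U
  have keyd : ∀ (σ : ℂ) (m : Fin 2), ∀ u ∈ U, wop σ m d u
      = wop σ m (fun w => A w 0 0) u * A u 1 1 + A u 0 0 * wop σ m (fun w => A w 1 1) u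
        - (wop σ m (fun w => A w 0 1) u * A u 1 0 + A u 0 1 * wop σ m (fun w => A w 1 0) u) := by
    intro σ m u hu
    have e1 : wop σ m d u = wop σ m (fun w => A w 0 0 * A w 1 1 - A w 0 1 * A w 1 0) u :=
      wop_congr_on hU (fun w _ => hdet2 w) hu
    rw [e1, wop_sub ((hdiff 0 0 u hu).fun_mul (hdiff 1 1 u hu))
        ((hdiff 0 1 u hu).fun_mul (hdiff 1 0 u hu)),
      wop_mul (hdiff 0 0 u hu) (hdiff 1 1 u hu), wop_mul (hdiff 0 1 u hu) (hdiff 1 0 u hu)]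
  -- step 1 : outer log
  have step1 : ∀ u ∈ U, wop s' l (fun w => Complex.log ((A w).det)) u = (d u)⁻¹ * wop s' l d u :=
    fun u hu => wop_cderiv (Complex.hasDerivAt_log (hdslit u hu)) (hddiff u hu)
  have hwd : ∀ (σ : ℂ) (m : Fin 2), ∀ u ∈ U, DifferentiableAt ℝ (wop σ m d) u :=
    fun σ m u hu => (wop_contDiffAt (hdsm u hu)).differentiableAt (by simp)
  have hinvd : DifferentiableAt ℝ (fun u => (d u)⁻¹) z :=
    ((hdsm z hz).inv (hdne z hz)).differentiableAt (by simp)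
  have step2 : wop s k (wop s' l (fun w => Complex.log ((A w).det))) z
      = wop s k (fun u => (d u)⁻¹ * wop s' l d u) z := wop_congr_on hU step1 hz
  have step3 : wop s k (fun u => (d u)⁻¹ * wop s' l d u) z
      = wop s k (fun u => (d u)⁻¹) z * wop s' l d z + (d z)⁻¹ * wop s k (wop s' l d) z :=
    wop_mul hinvd (hwd s' l z hz)
  have step4 : wop s k (fun u => (d u)⁻¹) z = -((d z) ^ 2)⁻¹ * wop s k d z :=
    wop_cderiv (hasDerivAt_inv (hdne z hz)) (hddiff z hz)
  -- second derivative of d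
  have step5 : wop s k (wop s' l d) z
      = wop s k (wop s' l (fun w => A w 0 0)) z * A z 1 1
        + wop s' l (fun w => A w 0 0) z * wop s k (fun w => A w 1 1) z
        + wop s k (fun w => A w 0 0) z * wop s' l (fun w => A w 1 1) z
        + A z 0 0 * wop s k (wop s' l (fun w => A w 1 1)) z
        - (wop s k (wop s' l (fun w => A w 0 1)) z * A z 1 0
          + wop s' l (fun w => A w 0 1) z * wop s k (fun w => A w 1 0) z
          + wop s k (fun w => A w 0 1) z * wop s' l (fun w => A w 1 0) z
          + A z 0 1 * wop s k (wop s' l (fun w => A w 1 0)) z) := by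
    have e1 : wop s k (wop s' l d) z = wop s k (fun u =>
        wop s' l (fun w => A w 0 0) u * A u 1 1 + A u 0 0 * wop s' l (fun w => A w 1 1) u
        - (wop s' l (fun w => A w 0 1) u * A u 1 0 + A u 0 1 * wop s' l (fun w => A w 1 0) u)) z :=
      wop_congr_on hU (keyd s' l) hz
    have dW : ∀ i j : Fin 2, DifferentiableAt ℝ (wop s' l (fun w => A w i j)) z :=
      fun i j => (wop_contDiffAt (hsm i j z hz)).differentiableAt (by simp)
    rw [e1, wop_sub (((dW 0 0).fun_mul (hdiff 1 1 z hz)).fun_add ((hdiff 0 0 z hz).fun_mul (dW 1 1)))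
        (((dW 0 1).fun_mul (hdiff 1 0 z hz)).fun_add ((hdiff 0 1 z hz).fun_mul (dW 1 0))),
      wop_add ((dW 0 0).fun_mul (hdiff 1 1 z hz)) ((hdiff 0 0 z hz).fun_mul (dW 1 1)),
      wop_add ((dW 0 1).fun_mul (hdiff 1 0 z hz)) ((hdiff 0 1 z hz).fun_mul (dW 1 0)),
      wop_mul (dW 0 0) (hdiff 1 1 z hz), wop_mul (hdiff 0 0 z hz) (dW 1 1),
      wop_mul (dW 0 1) (hdiff 1 0 z hz), wop_mul (hdiff 0 1 z hz) (dW 1 0)]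
    ring
  -- inverse entries
  have hA00 : (A z)⁻¹ 0 0 = (d z)⁻¹ * A z 1 1 := by rw [inv2]; simp [d]
  have hA01 : (A z)⁻¹ 0 1 = (d z)⁻¹ * -A z 0 1 := by rw [inv2]; simp [d]
  have hA10 : (A z)⁻¹ 1 0 = (d z)⁻¹ * -A z 1 0 := by rw [inv2]; simp [d]
  have hA11 : (A z)⁻¹ 1 1 = (d z)⁻¹ * A z 0 0 := by rw [inv2]; simp [d]
  have hkd := keyd s k z hz
  have hld := keyd s' l z hz
  have hdzne : d z ≠ 0 := hdne z hz
  rw [step2, step3, step4, step5, hkd, hld]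
  simp only [Fin.sum_univ_two]
  rw [hA00, hA01, hA10, hA11]
  linear_combination alg_logdet' (d z) (A z 0 0) (A z 0 1) (A z 1 0) (A z 1 1)
    (wop s k (fun w => A w 0 0) z) (wop s k (fun w => A w 0 1) z)
    (wop s k (fun w => A w 1 0) z) (wop s k (fun w => A w 1 1) z)
    (wop s' l (fun w => A w 0 0) z) (wop s' l (fun w => A w 0 1) z)
    (wop s' l (fun w => A w 1 0) z) (wop s' l (fun w => A w 1 1) z)
    (wop s k (wop s' l (fun w => A w 0 0)) z) (wop s k (wop s' l (fun w => A w 0 1)) z)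
    (wop s k (wop s' l (fun w => A w 1 0)) z) (wop s k (wop s' l (fun w => A w 1 1)) z)
    (hdet2 z) hdzne


lemma wop_const {s : ℂ} {i : Fin 2} {z : ℂ × ℂ} (c : ℂ) : wop s i (fun _ => c) z = 0 := by
  unfold wop pdv
  simp [fderiv_const]

lemma wop4_comm {U : Set (ℂ × ℂ)} (hU : IsOpen U) {f : ℂ × ℂ → ℂ}
    (hf : ∀ u ∈ U, ContDiffAt ℝ (⊤ : ℕ∞) f u) {z} (hz : z ∈ U) (σ τ σ' τ' : ℂ) (k l i j : Fin 2) :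
    wop σ k (wop τ l (wop σ' i (wop τ' j f))) z
      = wop σ' i (wop τ' j (wop σ k (wop τ l f))) z := by
  have h1 : ∀ u ∈ U, ContDiffAt ℝ (⊤ : ℕ∞) (wop τ' j f) u := fun u hu => wop_contDiffAt (hf u hu)
  have e1 : wop σ k (wop τ l (wop σ' i (wop τ' j f))) z
      = wop σ k (wop σ' i (wop τ l (wop τ' j f))) z :=
    wop_congr_on hU (fun u hu => wop_comm (h1 u hu)) hz
  have e2 : wop σ k (wop σ' i (wop τ l (wop τ' j f))) z
      = wop σ' i (wop σ k (wop τ l (wop τ' j f))) z :=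
    wop_comm (wop_contDiffAt (wop_contDiffAt (hf z hz)))
  have e3 : wop σ' i (wop σ k (wop τ l (wop τ' j f))) z
      = wop σ' i (wop σ k (wop τ' j (wop τ l f))) z := by
    refine wop_congr_on hU (fun u hu => ?_) hz
    exact wop_congr_on hU (fun w hw => wop_comm (hf w hw)) hu
  have e4 : wop σ' i (wop σ k (wop τ' j (wop τ l f))) z
      = wop σ' i (wop τ' j (wop σ k (wop τ l f))) z :=
    wop_congr_on hU (fun u hu => wop_comm (wop_contDiffAt (hf u hu))) hz
  rw [e1, e2, e3, e4]

lemma conj_wop {f : ℂ × ℂ → ℂ} {z} {s : ℂ} {i : Fin 2} (hf : DifferentiableAt ℝ f z) :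
    (starRingEnd ℂ) (wop s i f z)
      = wop ((starRingEnd ℂ) s) i (fun u => (starRingEnd ℂ) (f u)) z := by
  have hcf : DifferentiableAt ℝ (fun u => (starRingEnd ℂ) (f u)) z := by
    have : (fun u => (starRingEnd ℂ) (f u)) = fun u => Complex.conjCLE (f u) := rfl
    rw [this]
    exact ((Complex.conjCLE : ℂ →L[ℝ] ℂ).differentiableAt).comp z hf
  have h2 := wop_conj (s := s) (i := i) hcf
  simp only [Complex.conj_conj] at h2
  rw [← Complex.conj_conj (wop ((starRingEnd ℂ) s) i (fun u => (starRingEnd ℂ) (f u)) z), ← h2]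

lemma inv2_00 (M : Matrix (Fin 2) (Fin 2) ℂ) : M⁻¹ 0 0 = (M.det)⁻¹ * M 1 1 := by
  rw [inv2]; simp

lemma inv2_01 (M : Matrix (Fin 2) (Fin 2) ℂ) : M⁻¹ 0 1 = (M.det)⁻¹ * -M 0 1 := by
  rw [inv2]; simp

lemma inv2_10 (M : Matrix (Fin 2) (Fin 2) ℂ) : M⁻¹ 1 0 = (M.det)⁻¹ * -M 1 0 := by
  rw [inv2]; simp

lemma inv2_11 (M : Matrix (Fin 2) (Fin 2) ℂ) : M⁻¹ 1 1 = (M.det)⁻¹ * M 0 0 := by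
  rw [inv2]; simp

lemma det_contDiffAt {U : Set (ℂ × ℂ)} {A : (ℂ × ℂ) → Matrix (Fin 2) (Fin 2) ℂ}
    (hsm : ∀ i j : Fin 2, ∀ u ∈ U, ContDiffAt ℝ (⊤ : ℕ∞) (fun w => A w i j) u) :
    ∀ u ∈ U, ContDiffAt ℝ (⊤ : ℕ∞) (fun w => (A w).det) u := by
  intro u hu
  have : ContDiffAt ℝ (⊤ : ℕ∞) (fun w => A w 0 0 * A w 1 1 - A w 0 1 * A w 1 0) u :=
    ((hsm 0 0 u hu).mul (hsm 1 1 u hu)).sub ((hsm 0 1 u hu).mul (hsm 1 0 u hu))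
  exact this.congr_of_eventuallyEq
    (Filter.Eventually.of_forall (fun w => (Matrix.det_fin_two (A w))))

lemma inv_entry_contDiffAt {U : Set (ℂ × ℂ)} {A : (ℂ × ℂ) → Matrix (Fin 2) (Fin 2) ℂ}
    (hsm : ∀ i j : Fin 2, ∀ u ∈ U, ContDiffAt ℝ (⊤ : ℕ∞) (fun w => A w i j) u)
    (hpos : ∀ u ∈ U, (A u).PosDef) (l k : Fin 2) :
    ∀ u ∈ U, ContDiffAt ℝ (⊤ : ℕ∞) (fun w => (A w)⁻¹ l k) u := by
  intro u hu
  have hdet := det_contDiffAt hsm u hu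
  have hdinv : ContDiffAt ℝ (⊤ : ℕ∞) (fun w => ((A w).det)⁻¹) u := hdet.inv (posdef_det_ne (hpos u hu))
  fin_cases l <;> fin_cases k
  · exact (hdinv.mul (hsm 1 1 u hu)).congr_of_eventuallyEq
      (Filter.Eventually.of_forall (fun w => inv2_00 (A w)))
  · exact (hdinv.mul ((hsm 0 1 u hu).neg)).congr_of_eventuallyEq
      (Filter.Eventually.of_forall (fun w => inv2_01 (A w)))
  · exact (hdinv.mul ((hsm 1 0 u hu).neg)).congr_of_eventuallyEq
      (Filter.Eventually.of_forall (fun w => inv2_10 (A w)))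
  · exact (hdinv.mul (hsm 0 0 u hu)).congr_of_eventuallyEq
      (Filter.Eventually.of_forall (fun w => inv2_11 (A w)))

lemma herm_entry {M : Matrix (Fin 2) (Fin 2) ℂ} (h : M.PosDef) (i j : Fin 2) :
    (starRingEnd ℂ) (M i j) = M j i := by
  rw [← Complex.star_def]; exact h.1.apply j i

lemma herm_inv_entry {M : Matrix (Fin 2) (Fin 2) ℂ} (h : M.PosDef) (i j : Fin 2) :
    (starRingEnd ℂ) (M⁻¹ i j) = M⁻¹ j i := by
  rw [← Complex.star_def]; exact h.1.inv.apply j i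

lemma wirt_eq_wop : wirt = wop (-Complex.I) := by
  funext i f z
  unfold wirt wop pdv eE iI
  ring

lemma wbar_eq_wop : wbar = wop Complex.I := by
  funext i f z
  unfold wbar wop pdv eE iI
  ring

lemma wop2_add {U : Set (ℂ × ℂ)} (hU : IsOpen U) {f g : ℂ × ℂ → ℂ}
    (hf : ∀ u ∈ U, ContDiffAt ℝ (⊤ : ℕ∞) f u) (hg : ∀ u ∈ U, ContDiffAt ℝ (⊤ : ℕ∞) g u)
    {z} (hz : z ∈ U) (σ τ : ℂ) (i j : Fin 2) :
    wop σ i (wop τ j (fun u => f u + g u)) z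
      = wop σ i (wop τ j f) z + wop σ i (wop τ j g) z := by
  have inner : ∀ u ∈ U, wop τ j (fun w => f w + g w) u = wop τ j f u + wop τ j g u :=
    fun u hu => wop_add ((hf u hu).differentiableAt (by simp)) ((hg u hu).differentiableAt (by simp))
  rw [wop_congr_on hU inner hz]
  exact wop_add ((wop_contDiffAt (hf z hz)).differentiableAt (by simp))
    ((wop_contDiffAt (hg z hz)).differentiableAt (by simp))

lemma wop2_mul {U : Set (ℂ × ℂ)} (hU : IsOpen U) {f g : ℂ × ℂ → ℂ}
    (hf : ∀ u ∈ U, ContDiffAt ℝ (⊤ : ℕ∞) f u) (hg : ∀ u ∈ U, ContDiffAt ℝ (⊤ : ℕ∞) g u)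
    {z} (hz : z ∈ U) (σ τ : ℂ) (i j : Fin 2) :
    wop σ i (wop τ j (fun u => f u * g u)) z
      = wop σ i (wop τ j f) z * g z + wop τ j f z * wop σ i g z
        + wop σ i f z * wop τ j g z + f z * wop σ i (wop τ j g) z := by
  have inner : ∀ u ∈ U, wop τ j (fun w => f w * g w) u = wop τ j f u * g u + f u * wop τ j g u :=
    fun u hu => wop_mul ((hf u hu).differentiableAt (by simp)) ((hg u hu).differentiableAt (by simp))
  rw [wop_congr_on hU inner hz,
    wop_add (((wop_contDiffAt (hf z hz)).differentiableAt (by simp)).fun_mul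
        ((hg z hz).differentiableAt (by simp)))
      (((hf z hz).differentiableAt (by simp)).fun_mul
        ((wop_contDiffAt (hg z hz)).differentiableAt (by simp))),
    wop_mul ((wop_contDiffAt (hf z hz)).differentiableAt (by simp))
      ((hg z hz).differentiableAt (by simp)),
    wop_mul ((hf z hz).differentiableAt (by simp))
      ((wop_contDiffAt (hg z hz)).differentiableAt (by simp))]
  ring

set_option maxHeartbeats 4000000 in
/-- Along the Chern–Ricci flow `∂ₜ g_{i j̄} = −Ric^{Ch}(g)_{i j̄} = ∂ᵢ∂_j̄ log det g`, with
`g(t) = ĝ − 2t Ric(χ) + ∂∂̄φ`, one has the commutation identity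
`∂_k∂_l̄ g_{i j̄} − ∂ᵢ∂_j̄ g_{k l̄} = ∂_k∂_l̄ ĝ_{i j̄} − ∂ᵢ∂_j̄ ĝ_{k l̄}`, and the trace
`tr_χ ω = χ^{k l̄} g_{k l̄}` evolves by
`(∂/∂t − Δ_ω) tr_χ ω = −g^{i j̄} ∂ᵢ∂_j̄ χ^{k l̄} g_{k l̄}
  + χ^{k l̄} g^{i j̄}(∂_k∂_l̄ ĝ_{i j̄} − ∂ᵢ∂_j̄ ĝ_{k l̄})
  − 2 Re(g^{i j̄} ∂ᵢχ^{k l̄} ∂_j̄ g_{k l̄})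
  − χ^{k l̄} g^{p j̄} g^{i q̄} ∂_k g_{p q̄} ∂_l̄ g_{i j̄}`
(raised indices denote the transposed inverse matrix entries, `g^{i j̄} = (g⁻¹)_{j i}`). -/
theorem stmt_15 (U : Set (ℂ × ℂ)) (hU : IsOpen U)
    (g : ℝ → (ℂ × ℂ) → Matrix (Fin 2) (Fin 2) ℂ)
    (ghat χ Ric : (ℂ × ℂ) → Matrix (Fin 2) (Fin 2) ℂ)
    (φ : ℝ → (ℂ × ℂ) → ℂ)
    (hgsm : ∀ i j : Fin 2,
      ContDiffOn ℝ (⊤ : ℕ∞) (fun p : ℝ × (ℂ × ℂ) => g p.1 p.2 i j) (Set.univ ×ˢ U))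
    (hghatsm : ∀ i j : Fin 2, ContDiffOn ℝ (⊤ : ℕ∞) (fun w => ghat w i j) U)
    (hχsm : ∀ i j : Fin 2, ContDiffOn ℝ (⊤ : ℕ∞) (fun w => χ w i j) U)
    (hφsm : ∀ t : ℝ, ContDiffOn ℝ (⊤ : ℕ∞) (φ t) U)
    (hgpos : ∀ t : ℝ, ∀ w ∈ U, (g t w).PosDef)
    (hχpos : ∀ w ∈ U, (χ w).PosDef)
    (hstruct : ∀ t : ℝ, ∀ w ∈ U, ∀ i j : Fin 2,
      g t w i j = ghat w i j - 2 * t * Ric w i j + wirt i (wbar j (φ t)) w)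
    (hRicsym : ∀ w ∈ U, ∀ i j k l : Fin 2,
      wirt k (wbar l (fun u => Ric u i j)) w = wirt i (wbar j (fun u => Ric u k l)) w)
    (hflow : ∀ t : ℝ, ∀ w ∈ U, ∀ i j : Fin 2,
      deriv (fun s => g s w i j) t
        = wirt i (wbar j (fun u => Complex.log ((g t u).det))) w)
    (z : ℂ × ℂ) (hz : z ∈ U) (t : ℝ) :
    (∀ i j k l : Fin 2,
      wirt k (wbar l (fun u => g t u i j)) z - wirt i (wbar j (fun u => g t u k l)) z
        = wirt k (wbar l (fun u => ghat u i j)) z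
          - wirt i (wbar j (fun u => ghat u k l)) z) ∧
    deriv (fun s => ∑ k : Fin 2, ∑ l : Fin 2, (χ z)⁻¹ l k * g s z k l) t
      - (∑ i : Fin 2, ∑ j : Fin 2, (g t z)⁻¹ j i
          * wirt i (wbar j (fun u => ∑ k : Fin 2, ∑ l : Fin 2, (χ u)⁻¹ l k * g t u k l)) z)
    = -(∑ i : Fin 2, ∑ j : Fin 2, ∑ k : Fin 2, ∑ l : Fin 2,
          (g t z)⁻¹ j i * wirt i (wbar j (fun u => (χ u)⁻¹ l k)) z * g t z k l)
      + (∑ k : Fin 2, ∑ l : Fin 2, ∑ i : Fin 2, ∑ j : Fin 2,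
          (χ z)⁻¹ l k * (g t z)⁻¹ j i
            * (wirt k (wbar l (fun u => ghat u i j)) z
                - wirt i (wbar j (fun u => ghat u k l)) z))
      - ((∑ i : Fin 2, ∑ j : Fin 2, ∑ k : Fin 2, ∑ l : Fin 2,
            (g t z)⁻¹ j i * wirt i (fun u => (χ u)⁻¹ l k) z
              * wbar j (fun u => g t u k l) z)
          + (starRingEnd ℂ) (∑ i : Fin 2, ∑ j : Fin 2, ∑ k : Fin 2, ∑ l : Fin 2,
              (g t z)⁻¹ j i * wirt i (fun u => (χ u)⁻¹ l k) z
                * wbar j (fun u => g t u k l) z))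
      - (∑ k : Fin 2, ∑ l : Fin 2, ∑ p : Fin 2, ∑ i : Fin 2, ∑ j : Fin 2, ∑ q : Fin 2,
          (χ z)⁻¹ l k * (g t z)⁻¹ j p * (g t z)⁻¹ q i
            * wirt k (fun u => g t u p q) z * wbar l (fun u => g t u i j) z) := by
  classical
  simp only [wirt_eq_wop, wbar_eq_wop] at hstruct hRicsym hflow ⊢
  -- smoothness of data
  have hGsm : ∀ i j : Fin 2, ∀ u ∈ U, ContDiffAt ℝ (⊤ : ℕ∞) (fun w => g t w i j) u := by
    intro i j u hu
    have h1 : ContDiffAt ℝ (⊤ : ℕ∞) (fun p : ℝ × (ℂ × ℂ) => g p.1 p.2 i j) (t, u) :=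
      (hgsm i j).contDiffAt ((isOpen_univ.prod hU).mem_nhds (by simp [hu]))
    exact h1.comp u (ContDiffAt.prodMk contDiffAt_const contDiffAt_id)
  have hHsm : ∀ i j : Fin 2, ∀ u ∈ U, ContDiffAt ℝ (⊤ : ℕ∞) (fun w => ghat w i j) u :=
    fun i j u hu => (hghatsm i j u hu).contDiffAt (hU.mem_nhds hu)
  have hXsm : ∀ i j : Fin 2, ∀ u ∈ U, ContDiffAt ℝ (⊤ : ℕ∞) (fun w => χ w i j) u :=
    fun i j u hu => (hχsm i j u hu).contDiffAt (hU.mem_nhds hu)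
  have hPhsm : ∀ u ∈ U, ContDiffAt ℝ (⊤ : ℕ∞) (φ t) u :=
    fun u hu => (hφsm t u hu).contDiffAt (hU.mem_nhds hu)
  have hCsm : ∀ l k : Fin 2, ∀ u ∈ U, ContDiffAt ℝ (⊤ : ℕ∞) (fun w => (χ w)⁻¹ l k) u :=
    fun l k => inv_entry_contDiffAt hXsm hχpos l k
  -- Part 1
  have part1 : ∀ i j k l : Fin 2,
      wop (-Complex.I) k (wop Complex.I l (fun u => g t u i j)) z
          - wop (-Complex.I) i (wop Complex.I j (fun u => g t u k l)) z
        = wop (-Complex.I) k (wop Complex.I l (fun u => ghat u i j)) z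
          - wop (-Complex.I) i (wop Complex.I j (fun u => ghat u k l)) z := by
    have hTsm : ∀ a b : Fin 2, ∀ u ∈ U,
        ContDiffAt ℝ (⊤ : ℕ∞) (fun w => 2 * (t : ℂ) * Ric w a b) u := by
      intro a b u hu
      have h1 : ContDiffAt ℝ (⊤ : ℕ∞) (fun w => ghat w a b
          + wop (-Complex.I) a (wop Complex.I b (φ t)) w - g t w a b) u :=
        ((hHsm a b u hu).add (wop_contDiffAt (wop_contDiffAt (hPhsm u hu)))).sub
          (hGsm a b u hu)
      refine h1.congr_of_eventuallyEq
        (Filter.eventually_of_mem (hU.mem_nhds hu) (fun w hw => ?_))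
      have h2 := hstruct t w hw a b
      show 2 * (t : ℂ) * Ric w a b
          = ghat w a b + wop (-Complex.I) a (wop Complex.I b (φ t)) w - g t w a b
      rw [h2]; ring
    -- second derivative splits
    have E : ∀ a b c d : Fin 2,
        wop (-Complex.I) c (wop Complex.I d (fun u => g t u a b)) z
          = wop (-Complex.I) c (wop Complex.I d (fun u => ghat u a b)) z
            - wop (-Complex.I) c (wop Complex.I d (fun u => 2 * (t : ℂ) * Ric u a b)) z
            + wop (-Complex.I) c (wop Complex.I d
                (wop (-Complex.I) a (wop Complex.I b (φ t)))) z := by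
      intro a b c d
      have inner : ∀ u ∈ U, wop Complex.I d (fun w => g t w a b) u
          = wop Complex.I d (fun w => ghat w a b) u
            - wop Complex.I d (fun w => 2 * (t : ℂ) * Ric w a b) u
            + wop Complex.I d (wop (-Complex.I) a (wop Complex.I b (φ t))) u := by
        intro u hu
        have e0 : wop Complex.I d (fun w => g t w a b) u
            = wop Complex.I d (fun w => ghat w a b - 2 * (t : ℂ) * Ric w a b
                + wop (-Complex.I) a (wop Complex.I b (φ t)) w) u :=
          wop_congr_on hU (fun w hw => hstruct t w hw a b) hu
        rw [e0, wop_add (((hHsm a b u hu).differentiableAt (by simp)).fun_sub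
            ((hTsm a b u hu).differentiableAt (by simp)))
            ((wop_contDiffAt (wop_contDiffAt (hPhsm u hu))).differentiableAt (by simp)),
          wop_sub ((hHsm a b u hu).differentiableAt (by simp))
            ((hTsm a b u hu).differentiableAt (by simp))]
      have d1 : DifferentiableAt ℝ (wop Complex.I d (fun w => ghat w a b)) z :=
        (wop_contDiffAt (hHsm a b z hz)).differentiableAt (by simp)
      have d2 : DifferentiableAt ℝ (wop Complex.I d (fun w => 2 * (t:ℂ) * Ric w a b)) z :=
        (wop_contDiffAt (hTsm a b z hz)).differentiableAt (by simp)
      have d3 : DifferentiableAt ℝ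
          (wop Complex.I d (wop (-Complex.I) a (wop Complex.I b (φ t)))) z :=
        (wop_contDiffAt (wop_contDiffAt (wop_contDiffAt (hPhsm z hz)))).differentiableAt (by simp)
      calc wop (-Complex.I) c (wop Complex.I d (fun u => g t u a b)) z
          = wop (-Complex.I) c (fun u =>
              wop Complex.I d (fun w => ghat w a b) u
                - wop Complex.I d (fun w => 2 * (t:ℂ) * Ric w a b) u
                + wop Complex.I d (wop (-Complex.I) a (wop Complex.I b (φ t))) u) z :=
            wop_congr_on hU inner hz
        _ = wop (-Complex.I) c (fun u =>
              wop Complex.I d (fun w => ghat w a b) u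
                - wop Complex.I d (fun w => 2 * (t:ℂ) * Ric w a b) u) z
            + wop (-Complex.I) c
                (wop Complex.I d (wop (-Complex.I) a (wop Complex.I b (φ t)))) z :=
            wop_add (d1.fun_sub d2) d3
        _ = wop (-Complex.I) c (wop Complex.I d (fun u => ghat u a b)) z
            - wop (-Complex.I) c (wop Complex.I d (fun u => 2 * (t:ℂ) * Ric u a b)) z
            + wop (-Complex.I) c
                (wop Complex.I d (wop (-Complex.I) a (wop Complex.I b (φ t)))) z := by
            rw [wop_sub d1 d2]
    -- swap for the T part
    have hTswap : ∀ i j k l : Fin 2,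
        wop (-Complex.I) k (wop Complex.I l (fun u => 2 * (t : ℂ) * Ric u i j)) z
          = wop (-Complex.I) i (wop Complex.I j (fun u => 2 * (t : ℂ) * Ric u k l)) z := by
      intro i j k l
      by_cases ht : t = 0
      · subst ht
        have zz : ∀ (a b : Fin 2) (c : Fin 2),
            ∀ u ∈ U, wop Complex.I c (fun w => 2 * ((0:ℝ) : ℂ) * Ric w a b) u = 0 := by
          intro a b c u hu
          have : wop Complex.I c (fun w => 2 * ((0:ℝ) : ℂ) * Ric w a b) u
              = wop Complex.I c (fun _ => (0:ℂ)) u :=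
            wop_congr_on hU (fun w _ => by norm_num) hu
          rw [this, wop_const]
        have o1 : wop (-Complex.I) k (wop Complex.I l (fun u => 2 * ((0:ℝ):ℂ) * Ric u i j)) z
            = 0 := by
          rw [wop_congr_on hU (zz i j l) hz]
          exact wop_const 0
        have o2 : wop (-Complex.I) i (wop Complex.I j (fun u => 2 * ((0:ℝ):ℂ) * Ric u k l)) z
            = 0 := by
          rw [wop_congr_on hU (zz k l j) hz]
          exact wop_const 0
        rw [o1, o2]
      · have h2t : (2 * (t : ℂ)) ≠ 0 :=
          mul_ne_zero two_ne_zero (Complex.ofReal_ne_zero.2 ht)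
        have hRsm : ∀ a b : Fin 2, ∀ u ∈ U,
            ContDiffAt ℝ (⊤ : ℕ∞) (fun w => Ric w a b) u := by
          intro a b u hu
          refine ((contDiffAt_const (c := (2 * (t:ℂ))⁻¹)).mul (hTsm a b u hu)).congr_of_eventuallyEq
            (Filter.Eventually.of_forall (fun w => ?_))
          field_simp
        have key : ∀ a b c d : Fin 2,
            wop (-Complex.I) c (wop Complex.I d (fun u => 2 * (t:ℂ) * Ric u a b)) z
              = 2 * (t:ℂ) * wop (-Complex.I) c (wop Complex.I d (fun u => Ric u a b)) z := by
          intro a b c d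
          have inner : ∀ u ∈ U, wop Complex.I d (fun w => 2 * (t:ℂ) * Ric w a b) u
              = 2 * (t:ℂ) * wop Complex.I d (fun w => Ric w a b) u :=
            fun u hu => wop_const_mul _ ((hRsm a b u hu).differentiableAt (by simp))
          rw [wop_congr_on hU inner hz]
          exact wop_const_mul _ ((wop_contDiffAt (hRsm a b z hz)).differentiableAt (by simp))
        rw [key, key, hRicsym z hz i j k l]
    -- swap for the φ part
    have hPswap : ∀ i j k l : Fin 2,
        wop (-Complex.I) k (wop Complex.I l
            (wop (-Complex.I) i (wop Complex.I j (φ t)))) z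
          = wop (-Complex.I) i (wop Complex.I j
              (wop (-Complex.I) k (wop Complex.I l (φ t)))) z :=
      fun i j k l => wop4_comm hU hPhsm hz _ _ _ _ k l i j
    intro i j k l
    rw [E i j k l, E k l i j, hTswap i j k l, hPswap i j k l]
    ring
  refine ⟨part1, ?_⟩
  -- time derivative
  have hsline : ∀ k l : Fin 2, DifferentiableAt ℝ (fun s => g s z k l) t := by
    intro k l
    have h1 : ContDiffAt ℝ (⊤ : ℕ∞) (fun p : ℝ × (ℂ × ℂ) => g p.1 p.2 k l) (t, z) :=
      (hgsm k l).contDiffAt ((isOpen_univ.prod hU).mem_nhds (by simp [hz]))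
    exact (h1.comp t (ContDiffAt.prodMk contDiffAt_id contDiffAt_const)).differentiableAt (by simp)
  have hD : ∀ k l : Fin 2, HasDerivAt (fun s => g s z k l)
      (wop (-Complex.I) k (wop Complex.I l (fun u => Complex.log ((g t u).det))) z) t := by
    intro k l
    have h2 := (hsline k l).hasDerivAt
    rwa [hflow t z hz k l] at h2
  have hderiv : deriv (fun s => ∑ k : Fin 2, ∑ l : Fin 2, (χ z)⁻¹ l k * g s z k l) t
      = ∑ k : Fin 2, ∑ l : Fin 2, (χ z)⁻¹ l k
          * wop (-Complex.I) k (wop Complex.I l (fun u => Complex.log ((g t u).det))) z := by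
    have H : HasDerivAt (fun s => ∑ k : Fin 2, ∑ l : Fin 2, (χ z)⁻¹ l k * g s z k l)
        (∑ k : Fin 2, ∑ l : Fin 2, (χ z)⁻¹ l k
          * wop (-Complex.I) k (wop Complex.I l (fun u => Complex.log ((g t u).det))) z) t := by
      simp only [Fin.sum_univ_two]
      exact ((HasDerivAt.const_mul ((χ z)⁻¹ 0 0) (hD 0 0)).add
          (HasDerivAt.const_mul ((χ z)⁻¹ 1 0) (hD 0 1))).add
        ((HasDerivAt.const_mul ((χ z)⁻¹ 0 1) (hD 1 0)).add
          (HasDerivAt.const_mul ((χ z)⁻¹ 1 1) (hD 1 1)))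
    exact H.deriv
  -- log det second-derivative formula
  have hld : ∀ k l : Fin 2,
      wop (-Complex.I) k (wop Complex.I l (fun u => Complex.log ((g t u).det))) z
        = (∑ i : Fin 2, ∑ j : Fin 2, (g t z)⁻¹ j i
              * wop (-Complex.I) k (wop Complex.I l (fun u => g t u i j)) z)
          - ∑ p : Fin 2, ∑ q : Fin 2, ∑ i : Fin 2, ∑ j : Fin 2,
              (g t z)⁻¹ j p * (g t z)⁻¹ q i
                * wop (-Complex.I) k (fun u => g t u p q) z
                * wop Complex.I l (fun u => g t u i j) z :=
    fun k l => logdet_snd hU (g t) hGsm (hgpos t) hz _ _ k l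
  -- Laplacian expansion
  have lap : ∀ i j : Fin 2,
      wop (-Complex.I) i (wop Complex.I j
          (fun u => ∑ k : Fin 2, ∑ l : Fin 2, (χ u)⁻¹ l k * g t u k l)) z
        = ∑ k : Fin 2, ∑ l : Fin 2,
            (wop (-Complex.I) i (wop Complex.I j (fun u => (χ u)⁻¹ l k)) z * g t z k l
              + wop Complex.I j (fun u => (χ u)⁻¹ l k) z
                  * wop (-Complex.I) i (fun u => g t u k l) z
              + wop (-Complex.I) i (fun u => (χ u)⁻¹ l k) z
                  * wop Complex.I j (fun u => g t u k l) z
              + (χ z)⁻¹ l k * wop (-Complex.I) i (wop Complex.I j (fun u => g t u k l)) z) := by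
    intro i j
    have hprod : ∀ k l : Fin 2, ∀ u ∈ U,
        ContDiffAt ℝ (⊤ : ℕ∞) (fun w => (χ w)⁻¹ l k * g t w k l) u :=
      fun k l u hu => (hCsm l k u hu).mul (hGsm k l u hu)
    have hsum1 : ∀ u ∈ U, ContDiffAt ℝ (⊤ : ℕ∞)
        (fun w => (χ w)⁻¹ 0 0 * g t w 0 0 + (χ w)⁻¹ 1 0 * g t w 0 1) u :=
      fun u hu => (hprod 0 0 u hu).add (hprod 0 1 u hu)
    have hsum2 : ∀ u ∈ U, ContDiffAt ℝ (⊤ : ℕ∞)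
        (fun w => (χ w)⁻¹ 0 1 * g t w 1 0 + (χ w)⁻¹ 1 1 * g t w 1 1) u :=
      fun u hu => (hprod 1 0 u hu).add (hprod 1 1 u hu)
    have e0 : wop (-Complex.I) i (wop Complex.I j
          (fun u => ∑ k : Fin 2, ∑ l : Fin 2, (χ u)⁻¹ l k * g t u k l)) z
        = wop (-Complex.I) i (wop Complex.I j
            (fun u => ((χ u)⁻¹ 0 0 * g t u 0 0 + (χ u)⁻¹ 1 0 * g t u 0 1)
              + ((χ u)⁻¹ 0 1 * g t u 1 0 + (χ u)⁻¹ 1 1 * g t u 1 1))) z :=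
      wop_congr_on hU (fun u hu => wop_congr_on hU
        (fun w _ => by simp [Fin.sum_univ_two]) hu) hz
    have e1 : wop (-Complex.I) i (wop Complex.I j
          (fun u => ((χ u)⁻¹ 0 0 * g t u 0 0 + (χ u)⁻¹ 1 0 * g t u 0 1)
            + ((χ u)⁻¹ 0 1 * g t u 1 0 + (χ u)⁻¹ 1 1 * g t u 1 1))) z
        = wop (-Complex.I) i (wop Complex.I j
            (fun u => (χ u)⁻¹ 0 0 * g t u 0 0 + (χ u)⁻¹ 1 0 * g t u 0 1)) z
          + wop (-Complex.I) i (wop Complex.I j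
              (fun u => (χ u)⁻¹ 0 1 * g t u 1 0 + (χ u)⁻¹ 1 1 * g t u 1 1)) z :=
      wop2_add hU hsum1 hsum2 hz _ _ i j
    have e2 : wop (-Complex.I) i (wop Complex.I j
          (fun u => (χ u)⁻¹ 0 0 * g t u 0 0 + (χ u)⁻¹ 1 0 * g t u 0 1)) z
        = wop (-Complex.I) i (wop Complex.I j (fun u => (χ u)⁻¹ 0 0 * g t u 0 0)) z
          + wop (-Complex.I) i (wop Complex.I j (fun u => (χ u)⁻¹ 1 0 * g t u 0 1)) z :=
      wop2_add hU (hprod 0 0) (hprod 0 1) hz _ _ i j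
    have e3 : wop (-Complex.I) i (wop Complex.I j
          (fun u => (χ u)⁻¹ 0 1 * g t u 1 0 + (χ u)⁻¹ 1 1 * g t u 1 1)) z
        = wop (-Complex.I) i (wop Complex.I j (fun u => (χ u)⁻¹ 0 1 * g t u 1 0)) z
          + wop (-Complex.I) i (wop Complex.I j (fun u => (χ u)⁻¹ 1 1 * g t u 1 1)) z :=
      wop2_add hU (hprod 1 0) (hprod 1 1) hz _ _ i j
    have m00 : wop (-Complex.I) i (wop Complex.I j (fun u => (χ u)⁻¹ 0 0 * g t u 0 0)) z
        = wop (-Complex.I) i (wop Complex.I j (fun u => (χ u)⁻¹ 0 0)) z * g t z 0 0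
          + wop Complex.I j (fun u => (χ u)⁻¹ 0 0) z * wop (-Complex.I) i (fun u => g t u 0 0) z
          + wop (-Complex.I) i (fun u => (χ u)⁻¹ 0 0) z * wop Complex.I j (fun u => g t u 0 0) z
          + (χ z)⁻¹ 0 0 * wop (-Complex.I) i (wop Complex.I j (fun u => g t u 0 0)) z :=
      wop2_mul hU (hCsm 0 0) (hGsm 0 0) hz _ _ i j
    have m01 : wop (-Complex.I) i (wop Complex.I j (fun u => (χ u)⁻¹ 1 0 * g t u 0 1)) z
        = wop (-Complex.I) i (wop Complex.I j (fun u => (χ u)⁻¹ 1 0)) z * g t z 0 1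
          + wop Complex.I j (fun u => (χ u)⁻¹ 1 0) z * wop (-Complex.I) i (fun u => g t u 0 1) z
          + wop (-Complex.I) i (fun u => (χ u)⁻¹ 1 0) z * wop Complex.I j (fun u => g t u 0 1) z
          + (χ z)⁻¹ 1 0 * wop (-Complex.I) i (wop Complex.I j (fun u => g t u 0 1)) z :=
      wop2_mul hU (hCsm 1 0) (hGsm 0 1) hz _ _ i j
    have m10 : wop (-Complex.I) i (wop Complex.I j (fun u => (χ u)⁻¹ 0 1 * g t u 1 0)) z
        = wop (-Complex.I) i (wop Complex.I j (fun u => (χ u)⁻¹ 0 1)) z * g t z 1 0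
          + wop Complex.I j (fun u => (χ u)⁻¹ 0 1) z * wop (-Complex.I) i (fun u => g t u 1 0) z
          + wop (-Complex.I) i (fun u => (χ u)⁻¹ 0 1) z * wop Complex.I j (fun u => g t u 1 0) z
          + (χ z)⁻¹ 0 1 * wop (-Complex.I) i (wop Complex.I j (fun u => g t u 1 0)) z :=
      wop2_mul hU (hCsm 0 1) (hGsm 1 0) hz _ _ i j
    have m11 : wop (-Complex.I) i (wop Complex.I j (fun u => (χ u)⁻¹ 1 1 * g t u 1 1)) z
        = wop (-Complex.I) i (wop Complex.I j (fun u => (χ u)⁻¹ 1 1)) z * g t z 1 1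
          + wop Complex.I j (fun u => (χ u)⁻¹ 1 1) z * wop (-Complex.I) i (fun u => g t u 1 1) z
          + wop (-Complex.I) i (fun u => (χ u)⁻¹ 1 1) z * wop Complex.I j (fun u => g t u 1 1) z
          + (χ z)⁻¹ 1 1 * wop (-Complex.I) i (wop Complex.I j (fun u => g t u 1 1)) z :=
      wop2_mul hU (hCsm 1 1) (hGsm 1 1) hz _ _ i j
    rw [e0, e1, e2, e3, m00, m01, m10, m11]
    simp only [Fin.sum_univ_two]
  -- conjugation
  have hconjX : (starRingEnd ℂ) (∑ i : Fin 2, ∑ j : Fin 2, ∑ k : Fin 2, ∑ l : Fin 2,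
        (g t z)⁻¹ j i * wop (-Complex.I) i (fun u => (χ u)⁻¹ l k) z
          * wop Complex.I j (fun u => g t u k l) z)
      = ∑ i : Fin 2, ∑ j : Fin 2, ∑ k : Fin 2, ∑ l : Fin 2,
          (g t z)⁻¹ i j * wop Complex.I i (fun u => (χ u)⁻¹ k l) z
            * wop (-Complex.I) j (fun u => g t u l k) z := by
    have e1 : ∀ m l k : Fin 2, (starRingEnd ℂ)
          (wop (-Complex.I) m (fun u => (χ u)⁻¹ l k) z)
        = wop Complex.I m (fun u => (χ u)⁻¹ k l) z := by
      intro m l k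
      rw [conj_wop ((hCsm l k z hz).differentiableAt (by simp))]
      have h2 : ((starRingEnd ℂ) (-Complex.I)) = Complex.I := by simp
      rw [h2]
      exact wop_congr_on hU (fun u hu => herm_inv_entry (hχpos u hu) l k) hz
    have e2 : ∀ m k l : Fin 2, (starRingEnd ℂ)
          (wop Complex.I m (fun u => g t u k l) z)
        = wop (-Complex.I) m (fun u => g t u l k) z := by
      intro m k l
      rw [conj_wop ((hGsm k l z hz).differentiableAt (by simp))]
      have h2 : ((starRingEnd ℂ) Complex.I) = -Complex.I := by simp
      rw [h2]
      exact wop_congr_on hU (fun u hu => herm_entry (hgpos t u hu) k l) hz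
    simp only [map_sum, map_mul, e1, e2, herm_inv_entry (hgpos t z hz)]
  -- final assembly
  rw [hderiv, hconjX]
  simp only [hld, lap]
  simp only [Fin.sum_univ_two]
  simp only [← part1]
  ring
end

section
/- Suppose a smooth function Q on M × [0, T) satisfies (∂/∂t − Δ)Q < 0 at every point (with Δ a time-dependent elliptic operator with no zeroth order term) wherever t > 0. Then sup_{M×[0,T)} Q = sup_{M×{0}} Q; applied to Q = tψ̇ − ψ − 2t along the Chern–Ricci flow with (∂/∂t − Δ)Q = −tr_ω ω̂ < 0, this yields a uniform upper bound on ψ̇. -/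
open Set Filter

lemma left_deriv_nonneg {f : ℝ → ℝ} {a b : ℝ} (hab : a < b)
    (hd : DifferentiableAt ℝ f b) (h : ∀ s ∈ Set.Icc a b, f s ≤ f b) :
    0 ≤ deriv f b := by
  have hs : Tendsto (slope f b) (nhdsWithin b {b}ᶜ) (nhds (deriv f b)) :=
    hasDerivAt_iff_tendsto_slope.mp hd.hasDerivAt
  have hs' : Tendsto (slope f b) (nhdsWithin b (Iio b)) (nhds (deriv f b)) :=
    hs.mono_left (nhdsWithin_mono _ fun x hx => ne_of_lt hx)
  refine ge_of_tendsto hs' ?_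
  filter_upwards [Ioo_mem_nhdsLT_of_mem ⟨hab, le_refl b⟩] with s hsm
  have h1 : f s - f b ≤ 0 := sub_nonpos.2 (h s ⟨hsm.1.le, hsm.2.le⟩)
  have h2 : s - b < 0 := sub_neg.2 hsm.2
  rw [slope_def_field]
  exact div_nonneg_iff.2 (Or.inr ⟨h1, h2.le⟩)

/-- Parabolic maximum principle on a compact manifold, applied along the Chern–Ricci flow:
if `Q` satisfies `(∂/∂t − Δ)Q < 0` for `t > 0`, where `Δ` is a (time-dependent) elliptic
operator with no zeroth order term — encoded by the property that `ΔQ ≤ 0` at any spatial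
maximum point of `Q(·,t)` — then `sup_{M×[0,T)} Q = sup_{M×{0}} Q`.  Applied to
`Q = tψ̇ − ψ − 2t`, this yields a uniform upper bound on `ψ̇`. -/
theorem stmt_18 {M : Type*} [TopologicalSpace M] [CompactSpace M] [Nonempty M]
    (T : ℝ) (hT : 0 < T)
    (Q : M → ℝ → ℝ) (L : ℝ → M → ℝ)
    (hcont : ContinuousOn (fun p : M × ℝ => Q p.1 p.2) (univ ×ˢ Ico 0 T))
    (hdiff : ∀ x : M, ∀ t ∈ Ioo 0 T, DifferentiableAt ℝ (Q x) t)
    (hmax : ∀ t ∈ Ioo 0 T, ∀ x : M, IsMaxOn (fun y => Q y t) univ x → L t x ≤ 0)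
    (hflow : ∀ t ∈ Ioo 0 T, ∀ x : M, deriv (Q x) t - L t x < 0)
    (ψ : M → ℝ → ℝ)
    (hQdef : ∀ x : M, ∀ t ∈ Ico 0 T, Q x t = t * deriv (ψ x) t - ψ x t - 2 * t)
    (hψbdd : ∃ Cψ : ℝ, ∀ x : M, ∀ t ∈ Ico 0 T, |ψ x t| ≤ Cψ)
    (hψ'cont : ContinuousOn (fun p : M × ℝ => deriv (ψ p.1) p.2) (univ ×ˢ Ico 0 T)) :
    sSup {r : ℝ | ∃ x : M, ∃ t ∈ Ico 0 T, Q x t = r} = sSup {r : ℝ | ∃ x : M, Q x 0 = r} ∧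
    ∃ C : ℝ, ∀ x : M, ∀ t ∈ Ico 0 T, deriv (ψ x) t ≤ C := by
  obtain ⟨Cψ, hCψ⟩ := hψbdd
  set S0 : ℝ := sSup {r : ℝ | ∃ x : M, Q x 0 = r} with hS0
  -- the slice set at t = 0 is the image of a compact set under a continuous map
  have h0T : (0:ℝ) ∈ Ico 0 T := ⟨le_refl 0, hT⟩
  have hcont0 : Continuous (fun x : M => Q x 0) := by
    have hmap : Continuous (fun x : M => ((x, (0:ℝ)) : M × ℝ)) :=
      continuous_id.prodMk continuous_const
    exact hcont.comp_continuous hmap (fun x => by simp [h0T])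
  have hset0 : {r : ℝ | ∃ x : M, Q x 0 = r} = (fun x : M => Q x 0) '' univ := by
    ext r; simp [eq_comm]
  have hbdd0 : BddAbove {r : ℝ | ∃ x : M, Q x 0 = r} := by
    rw [hset0]
    exact (isCompact_univ.image hcont0).bddAbove
  have hne0 : {r : ℝ | ∃ x : M, Q x 0 = r}.Nonempty :=
    ⟨Q (Classical.arbitrary M) 0, ⟨_, rfl⟩⟩
  have hle0 : ∀ x : M, Q x 0 ≤ S0 := fun x => le_csSup hbdd0 ⟨x, rfl⟩
  -- key: Q x t ≤ S0 for all (x,t) in M × [0,T)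
  have key : ∀ x : M, ∀ t ∈ Ico 0 T, Q x t ≤ S0 := by
    intro x t ht
    -- work on a compact time interval [0, t''] with t ≤ t'' < T
    set t'' : ℝ := (t + T) / 2 with ht''
    have htt'' : t ≤ t'' := by simp only [ht'']; linarith [ht.2]
    have ht''T : t'' < T := by simp only [ht'']; linarith [ht.2]
    have ht''0 : (0:ℝ) ≤ t'' := le_trans ht.1 htt''
    set K : Set (M × ℝ) := univ ×ˢ Icc 0 t'' with hK
    have hKc : IsCompact K := isCompact_univ.prod isCompact_Icc
    have hKsub : K ⊆ univ ×ˢ Ico 0 T := by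
      intro p hp
      exact ⟨mem_univ _, hp.2.1, lt_of_le_of_lt hp.2.2 ht''T⟩
    have hKne : K.Nonempty := ⟨(Classical.arbitrary M, 0), mem_univ _, le_refl 0, ht''0⟩
    obtain ⟨p0, hp0K, hp0max⟩ := hKc.exists_isMaxOn hKne (hcont.mono hKsub)
    obtain ⟨x0, t0⟩ := p0
    have ht0 : t0 ∈ Icc (0:ℝ) t'' := hp0K.2
    have ht0T : t0 < T := lt_of_le_of_lt ht0.2 ht''T
    -- the maximum cannot be attained at a positive time
    have ht0eq : t0 = 0 := by
      by_contra hne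
      have ht0pos : 0 < t0 := lt_of_le_of_ne ht0.1 (Ne.symm hne)
      have ht0mem : t0 ∈ Ioo 0 T := ⟨ht0pos, ht0T⟩
      -- x0 is a spatial maximum at time t0
      have hsp : IsMaxOn (fun y => Q y t0) univ x0 := by
        intro y _
        exact hp0max (a := (y, t0)) ⟨mem_univ _, ht0⟩
      have hL : L t0 x0 ≤ 0 := hmax t0 ht0mem x0 hsp
      -- the time derivative at t0 is nonnegative (left max)
      have hd : 0 ≤ deriv (Q x0) t0 := by
        refine left_deriv_nonneg ht0pos (hdiff x0 t0 ht0mem) ?_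
        intro s hsm
        exact hp0max (a := (x0, s)) ⟨mem_univ _, hsm.1, le_trans hsm.2 ht0.2⟩
      have := hflow t0 ht0mem x0
      linarith
    have : Q x t ≤ Q x0 t0 := hp0max (a := (x, t)) ⟨mem_univ _, ht.1, htt''⟩
    rw [ht0eq] at this
    exact le_trans this (hle0 x0)
  -- part 1
  have hbigsub : {r : ℝ | ∃ x : M, Q x 0 = r} ⊆ {r : ℝ | ∃ x : M, ∃ t ∈ Ico 0 T, Q x t = r} :=
    fun r ⟨x, hx⟩ => ⟨x, 0, h0T, hx⟩
  have hbigbdd : BddAbove {r : ℝ | ∃ x : M, ∃ t ∈ Ico 0 T, Q x t = r} := by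
    refine ⟨S0, ?_⟩
    rintro r ⟨x, t, ht, rfl⟩
    exact key x t ht
  have hbigne : {r : ℝ | ∃ x : M, ∃ t ∈ Ico 0 T, Q x t = r}.Nonempty :=
    ⟨Q (Classical.arbitrary M) 0, _, 0, h0T, rfl⟩
  have part1 : sSup {r : ℝ | ∃ x : M, ∃ t ∈ Ico 0 T, Q x t = r} = S0 := by
    refine le_antisymm ?_ (csSup_le_csSup hbigbdd hne0 hbigsub)
    refine csSup_le hbigne ?_
    rintro r ⟨x, t, ht, rfl⟩
    exact key x t ht
  refine ⟨part1, ?_⟩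
  -- part 2 : uniform bound on deriv ψ
  -- bound on the compact region [0, T/2]
  have hhalf : Icc (0:ℝ) (T/2) ⊆ Ico 0 T := fun s hs => ⟨hs.1, lt_of_le_of_lt hs.2 (by linarith)⟩
  have hK2c : IsCompact ((univ : Set M) ×ˢ Icc (0:ℝ) (T/2)) := isCompact_univ.prod isCompact_Icc
  have hK2sub : (univ : Set M) ×ˢ Icc (0:ℝ) (T/2) ⊆ univ ×ˢ Ico 0 T :=
    fun p hp => ⟨mem_univ _, hhalf hp.2⟩
  have hbdd1 : BddAbove ((fun p : M × ℝ => deriv (ψ p.1) p.2) '' ((univ : Set M) ×ˢ Icc (0:ℝ) (T/2))) :=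
    (hK2c.image_of_continuousOn (hψ'cont.mono hK2sub)).bddAbove
  obtain ⟨C1, hC1⟩ := hbdd1
  set N : ℝ := max (S0 + Cψ + 2 * T) 0 with hN
  refine ⟨max C1 (N / (T/2)), ?_⟩
  intro x t ht
  rcases le_or_gt t (T/2) with hcase | hcase
  · -- small times: continuity bound
    have : deriv (ψ x) t ≤ C1 :=
      hC1 ⟨(x, t), ⟨mem_univ _, ht.1, hcase⟩, rfl⟩
    exact le_trans this (le_max_left _ _)
  · -- large times: use Q ≤ S0
    have hQ := key x t ht
    rw [hQdef x t ht] at hQ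
    have hψb := (abs_le.mp (hCψ x t ht)).2
    have htpos : 0 < t := lt_trans (by linarith) hcase
    have h1 : t * deriv (ψ x) t ≤ S0 + Cψ + 2 * T := by nlinarith [ht.2]
    have h2 : t * deriv (ψ x) t ≤ N := le_trans h1 (le_max_left _ _)
    have h3 : deriv (ψ x) t ≤ N / t := (le_div_iff₀ htpos).mpr (by linarith [mul_comm t (deriv (ψ x) t)])
    have h4 : N / t ≤ N / (T/2) :=
      div_le_div_of_nonneg_left (le_max_right _ _) (by linarith) hcase.le
    calc deriv (ψ x) t ≤ N / t := h3
      _ ≤ N / (T/2) := h4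
      _ ≤ max C1 (N / (T/2)) := le_max_right _ _
end
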